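/- Let n be a nonnegative integer such that 6n + 1 is not a perfect square. Then for each δ ∈ {0, 1}, there exist integers x, y, z with x ≡ δ (mod 2) such that 6n + 1 = x² + 3y² + 6z². -/

import Mathlib

/-!
Write `N = 6n + 1`. Since `N` is odd, Dirichlet's theorem gives a prime `p ≡ 4N - 1 (mod 8N)`, so
`p ≡ 3 (mod 8)` and `p ≡ -1 (mod N)`; quadratic reciprocity then makes `-2N` a square modulo `p`,
and this square root produces a positive definite integral ternary form of determinant `1` that
represents `2N`. By a Hermite-type bound on the minimum, every such form is equivalent to
`x² + y² + z²`, so `2N = a² + b² + c²`, and a linear change of variables turns this into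
`N = x² + 3y² + 6z²`.

The form `x² + 3y² + 6z²` has the rational automorph
`(x, y, z) ↦ (y + 2z, (x + 2y - 2z) / 3, (x - y + z) / 3)`, which flips the parity of `x` (as `N` is
odd, `x ≢ y (mod 2)`). After changing the signs of `y` and `z` it is integral as soon as `3` does
not divide both `y` and `z`; that can be arranged by a descent in `ℤ[√-2]` unless `y = z = 0`,
which is excluded because `N` is not a square.
-/

open Matrix

section QuadraticForms

variable {n : Type*} [Fintype n]

def IsPrimitiveVector (v : n → ℤ) : Prop := ∀ g : ℤ, (∀ i, g ∣ v i) → IsUnit g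

theorem Matrix.dotProduct_mulVec_transpose_mul_mul (S P : Matrix n n ℤ) (w : n → ℤ) :
    w ⬝ᵥ (Pᵀ * S * P) *ᵥ w = (P *ᵥ w) ⬝ᵥ S *ᵥ (P *ᵥ w) := by
  simp only [← mulVec_mulVec, dotProduct_mulVec _ Pᵀ, vecMul_transpose]

theorem Matrix.PosDef.dotProduct_mulVec_pos_int {S : Matrix n n ℤ} (hS : S.PosDef) {v : n → ℤ}
    (hv : v ≠ 0) : 0 < v ⬝ᵥ S *ᵥ v := by
  simpa using hS.dotProduct_mulVec_pos hv

theorem Matrix.PosDef.exists_forall_le [DecidableEq n] [Nonempty n] {S : Matrix n n ℤ}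
    (hS : S.PosDef) : ∃ v ≠ 0, ∀ w ≠ 0, v ⬝ᵥ S *ᵥ v ≤ w ⬝ᵥ S *ᵥ w := by
  obtain ⟨_, ⟨v, hv, rfl⟩, hmin⟩ := Int.exists_least_of_bdd
    (P := fun k ↦ ∃ v ≠ 0, v ⬝ᵥ S *ᵥ v = k)
    ⟨0, fun _ ⟨v, hv, hk⟩ ↦ hk ▸ (hS.dotProduct_mulVec_pos_int hv).le⟩
    ⟨_, Pi.single (Classical.arbitrary n) 1, by simp, rfl⟩
  exact ⟨v, hv, fun w hw ↦ hmin _ ⟨w, hw, rfl⟩⟩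

theorem Matrix.PosDef.isPrimitiveVector_of_forall_le {S : Matrix n n ℤ} (hS : S.PosDef)
    {v : n → ℤ} (hv : v ≠ 0) (hmin : ∀ w ≠ 0, v ⬝ᵥ S *ᵥ v ≤ w ⬝ᵥ S *ᵥ w) :
    IsPrimitiveVector v := by
  intro g hg
  choose w hw using hg
  have hvw : v = g • w := funext hw
  have hw0 : w ≠ 0 := by rintro rfl; simp_all
  have hg0 : g ≠ 0 := by rintro rfl; simp_all
  have hpos := hS.dotProduct_mulVec_pos_int hw0
  have h := hmin w hw0
  rw [hvw, mulVec_smul, dotProduct_smul, smul_dotProduct, smul_eq_mul, smul_eq_mul] at h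
  have hg1 : g * g ≤ 1 := le_of_mul_le_mul_right (by linarith) hpos
  have : -1 ≤ g ∧ g ≤ 1 := ⟨by nlinarith, by nlinarith⟩
  exact Int.isUnit_iff.2 (by omega)

theorem Matrix.PosDef.exists_equiv_forall_apply_le [DecidableEq n] [Nonempty n]
    {S : Matrix n n ℤ} (hS : S.PosDef) (i : n)
    (hcompl : ∀ v, IsPrimitiveVector v → ∃ P : Matrix n n ℤ, P.det = 1 ∧ P *ᵥ Pi.single i 1 = v) :
    ∃ T : Matrix n n ℤ, T.PosDef ∧ T.det = S.det ∧ (∀ w ≠ 0, T i i ≤ w ⬝ᵥ T *ᵥ w) ∧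
      (∃ v ≠ 0, v ⬝ᵥ S *ᵥ v = T i i) ∧ ∀ v, ∃ w, v ⬝ᵥ S *ᵥ v = w ⬝ᵥ T *ᵥ w := by
  obtain ⟨v, hv, hmin⟩ := hS.exists_forall_le
  obtain ⟨P, hP, hPv⟩ := hcompl v (hS.isPrimitiveVector_of_forall_le hv hmin)
  have hinj : Function.Injective P.mulVec := mulVec_injective_of_det_ne_zero (by simp [hP])
  have hsurj : Function.Surjective P.mulVec :=
    mulVec_surjective_iff_isUnit.2 ((isUnit_iff_isUnit_det P).2 (by simp [hP]))
  have hT : (Pᵀ * S * P).PosDef := by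
    simpa [conjTranspose_eq_transpose_of_trivial] using
      hS.conjTranspose_mul_mul_same hinj
  have hTi : (Pᵀ * S * P) i i = v ⬝ᵥ S *ᵥ v := by
    rw [← hPv, ← dotProduct_mulVec_transpose_mul_mul]
    simp
  refine ⟨Pᵀ * S * P, hT, by simp [hP], fun w hw ↦ ?_, ⟨v, hv, hTi.symm⟩, fun v ↦ ?_⟩
  · rw [hTi, dotProduct_mulVec_transpose_mul_mul]
    exact hmin _ fun h ↦ hw (hinj (h.trans (mulVec_zero P).symm))
  · obtain ⟨w, rfl⟩ := hsurj v
    exact ⟨w, (dotProduct_mulVec_transpose_mul_mul S P w).symm⟩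

end QuadraticForms

theorem Int.exists_sq_two_mul_mul_add_le (a : ℤ) {b : ℤ} (hb : 0 < b) :
    ∃ x, (2 * (b * x + a)) ^ 2 ≤ b ^ 2 := by
  have h0 := Int.emod_nonneg (2 * a + b) (by positivity : 2 * b ≠ 0)
  have h1 := Int.emod_lt_of_pos (2 * a + b) (by positivity : 0 < 2 * b)
  have h2 := Int.emod_def (2 * a + b) (2 * b)
  exact ⟨-((2 * a + b) / (2 * b)), by nlinarith⟩

theorem Matrix.IsHermitian.mul_dotProduct_mulVec_fin_two {T : Matrix (Fin 2) (Fin 2) ℤ}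
    (hT : T.IsHermitian) (x y : ℤ) :
    T 0 0 * (![x, y] ⬝ᵥ T *ᵥ ![x, y]) = (T 0 0 * x + T 0 1 * y) ^ 2 + T.det * y ^ 2 := by
  have h10 : T 1 0 = T 0 1 := by simpa using hT.apply 0 1
  simp [dotProduct, mulVec, Fin.sum_univ_two, det_fin_two, h10]
  ring

theorem Matrix.posDef_fin_two_of_pos {T : Matrix (Fin 2) (Fin 2) ℤ} (hT : T.IsHermitian)
    (h00 : 0 < T 0 0) (hdet : 0 < T.det) : T.PosDef := by
  refine PosDef.of_dotProduct_mulVec_pos hT fun w hw ↦ ?_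
  obtain ⟨x, y, rfl⟩ : ∃ x y, w = ![x, y] := ⟨w 0, w 1, by ext i; fin_cases i <;> rfl⟩
  rw [star_trivial]
  refine pos_of_mul_pos_right (hT.mul_dotProduct_mulVec_fin_two x y ▸ ?_) h00.le
  by_cases hy : y = 0
  · subst hy
    have hx : x ≠ 0 := by rintro rfl; simp at hw
    have := mul_ne_zero h00.ne' hx
    simp only [mul_zero, add_zero, zero_pow two_ne_zero]
    positivity
  · have : 0 < T.det * y ^ 2 := by positivity
    positivity

theorem IsPrimitiveVector.exists_det_eq_one_fin_two {v : Fin 2 → ℤ} (hv : IsPrimitiveVector v) :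
    ∃ P : Matrix (Fin 2) (Fin 2) ℤ, P.det = 1 ∧ P *ᵥ Pi.single 0 1 = v := by
  obtain ⟨a, b, hab⟩ : IsCoprime (v 0) (v 1) :=
    IsRelPrime.isCoprime fun g h0 h1 ↦ hv g (Fin.forall_fin_two.2 ⟨h0, h1⟩)
  refine ⟨!![v 0, -b; v 1, a], by simp [det_fin_two]; linear_combination hab, ?_⟩
  ext i; fin_cases i <;> simp

theorem Matrix.PosDef.three_mul_sq_le_det_of_forall_le {T : Matrix (Fin 2) (Fin 2) ℤ}
    (hT : T.PosDef) (hmin : ∀ w ≠ 0, T 0 0 ≤ w ⬝ᵥ T *ᵥ w) : 3 * T 0 0 ^ 2 ≤ 4 * T.det := by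
  have h00 : 0 < T 0 0 := hT.diag_pos
  obtain ⟨x, hx⟩ := Int.exists_sq_two_mul_mul_add_le (T 0 1) h00
  have hw := hT.isHermitian.mul_dotProduct_mulVec_fin_two x 1
  have hle := mul_le_mul_of_nonneg_left (hmin ![x, 1] (by simp)) h00.le
  nlinarith

theorem Matrix.PosDef.exists_three_mul_sq_le_det_fin_two {S : Matrix (Fin 2) (Fin 2) ℤ}
    (hS : S.PosDef) : ∃ v ≠ 0, 3 * (v ⬝ᵥ S *ᵥ v) ^ 2 ≤ 4 * S.det := by
  obtain ⟨T, hT, hdet, hmin, ⟨v, hv, hvT⟩, -⟩ :=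
    hS.exists_equiv_forall_apply_le 0 fun _ ↦ IsPrimitiveVector.exists_det_eq_one_fin_two
  exact ⟨v, hv, hvT ▸ hdet ▸ hT.three_mul_sq_le_det_of_forall_le hmin⟩

theorem Matrix.PosDef.exists_sq_add_sq_of_det_eq_one {S : Matrix (Fin 2) (Fin 2) ℤ}
    (hS : S.PosDef) (hdet : S.det = 1) (v : Fin 2 → ℤ) : ∃ a b, v ⬝ᵥ S *ᵥ v = a ^ 2 + b ^ 2 := by
  obtain ⟨T, hT, hTdet, hmin, -, hval⟩ :=
    hS.exists_equiv_forall_apply_le 0 fun _ ↦ IsPrimitiveVector.exists_det_eq_one_fin_two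
  have h00 : T 0 0 = 1 := by
    have := hT.three_mul_sq_le_det_of_forall_le hmin
    have := hT.diag_pos (i := 0)
    nlinarith
  obtain ⟨w, hw⟩ := hval v
  obtain ⟨x, y, rfl⟩ : ∃ x y, w = ![x, y] := ⟨w 0, w 1, by ext i; fin_cases i <;> rfl⟩
  have := hT.isHermitian.mul_dotProduct_mulVec_fin_two x y
  rw [h00, hTdet, hdet, one_mul, one_mul, one_mul, ← hw] at this
  exact ⟨_, _, this⟩

/-- `T 0 0` times the Schur complement of the entry `T 0 0` of `T`: completing the square in the
first variable leaves the binary form with this Gram matrix. -/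
def Matrix.scaledSchur (T : Matrix (Fin 3) (Fin 3) ℤ) : Matrix (Fin 2) (Fin 2) ℤ :=
  !![T 0 0 * T 1 1 - T 0 1 ^ 2, T 0 0 * T 1 2 - T 0 1 * T 0 2;
     T 0 0 * T 1 2 - T 0 1 * T 0 2, T 0 0 * T 2 2 - T 0 2 ^ 2]

theorem Matrix.isHermitian_scaledSchur (T : Matrix (Fin 3) (Fin 3) ℤ) :
    T.scaledSchur.IsHermitian := by
  ext i j; fin_cases i <;> fin_cases j <;> rfl

theorem Matrix.IsHermitian.det_scaledSchur {T : Matrix (Fin 3) (Fin 3) ℤ} (hT : T.IsHermitian) :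
    T.scaledSchur.det = T 0 0 * T.det := by
  have h10 : T 1 0 = T 0 1 := by simpa using hT.apply 0 1
  have h20 : T 2 0 = T 0 2 := by simpa using hT.apply 0 2
  have h21 : T 2 1 = T 1 2 := by simpa using hT.apply 1 2
  simp only [scaledSchur, det_fin_two_of, det_fin_three, h10, h20, h21]
  ring

theorem Matrix.IsHermitian.mul_dotProduct_mulVec_fin_three {T : Matrix (Fin 3) (Fin 3) ℤ}
    (hT : T.IsHermitian) (x y z : ℤ) :
    T 0 0 * (![x, y, z] ⬝ᵥ T *ᵥ ![x, y, z]) = (T 0 0 * x + T 0 1 * y + T 0 2 * z) ^ 2 +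
      ![y, z] ⬝ᵥ T.scaledSchur *ᵥ ![y, z] := by
  have h10 : T 1 0 = T 0 1 := by simpa using hT.apply 0 1
  have h20 : T 2 0 = T 0 2 := by simpa using hT.apply 0 2
  have h21 : T 2 1 = T 1 2 := by simpa using hT.apply 1 2
  simp [scaledSchur, dotProduct, mulVec, Fin.sum_univ_two, Fin.sum_univ_three, h10, h20, h21]
  ring

theorem Matrix.posDef_of_posDef_scaledSchur {T : Matrix (Fin 3) (Fin 3) ℤ} (hT : T.IsHermitian)
    (h00 : 0 < T 0 0) (hG : T.scaledSchur.PosDef) : T.PosDef := by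
  refine PosDef.of_dotProduct_mulVec_pos hT fun w hw ↦ ?_
  obtain ⟨x, y, z, rfl⟩ : ∃ x y z, w = ![x, y, z] :=
    ⟨w 0, w 1, w 2, by ext i; fin_cases i <;> rfl⟩
  rw [star_trivial]
  refine pos_of_mul_pos_right (hT.mul_dotProduct_mulVec_fin_three x y z ▸ ?_) h00.le
  by_cases hyz : ![y, z] = 0
  · obtain ⟨rfl, rfl⟩ : y = 0 ∧ z = 0 := by simpa using hyz
    have hx : x ≠ 0 := by rintro rfl; simp at hw
    have := mul_ne_zero h00.ne' hx
    simp only [mul_zero, add_zero, hyz, zero_dotProduct]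
    positivity
  · have := hG.dotProduct_mulVec_pos_int hyz
    positivity

theorem Matrix.PosDef.three_mul_sq_le_scaledSchur {T : Matrix (Fin 3) (Fin 3) ℤ} (hT : T.PosDef)
    (hmin : ∀ w ≠ 0, T 0 0 ≤ w ⬝ᵥ T *ᵥ w) {u : Fin 2 → ℤ} (hu : u ≠ 0) :
    3 * T 0 0 ^ 2 ≤ 4 * (u ⬝ᵥ T.scaledSchur *ᵥ u) := by
  have h00 : 0 < T 0 0 := hT.diag_pos
  obtain ⟨y, z, rfl⟩ : ∃ y z, u = ![y, z] := ⟨u 0, u 1, by ext i; fin_cases i <;> rfl⟩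
  obtain ⟨x, hx⟩ := Int.exists_sq_two_mul_mul_add_le (T 0 1 * y + T 0 2 * z) h00
  have hw0 : ![x, y, z] ≠ 0 := by simpa using fun _ ↦ hu
  have hw := hT.isHermitian.mul_dotProduct_mulVec_fin_three x y z
  have hle := mul_le_mul_of_nonneg_left (hmin _ hw0) h00.le
  nlinarith

theorem Matrix.PosDef.posDef_scaledSchur_of_forall_le {T : Matrix (Fin 3) (Fin 3) ℤ}
    (hT : T.PosDef) (hmin : ∀ w ≠ 0, T 0 0 ≤ w ⬝ᵥ T *ᵥ w) : T.scaledSchur.PosDef := by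
  refine PosDef.of_dotProduct_mulVec_pos (isHermitian_scaledSchur T) fun u hu ↦ ?_
  have := hT.three_mul_sq_le_scaledSchur hmin hu
  have := hT.diag_pos (i := 0)
  rw [star_trivial]
  nlinarith

theorem Matrix.PosDef.apply_zero_zero_eq_one {T : Matrix (Fin 3) (Fin 3) ℤ} (hT : T.PosDef)
    (hdet : T.det = 1) (hmin : ∀ w ≠ 0, T 0 0 ≤ w ⬝ᵥ T *ᵥ w) : T 0 0 = 1 := by
  have h00 : 0 < T 0 0 := hT.diag_pos
  have hG := hT.posDef_scaledSchur_of_forall_le hmin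
  obtain ⟨u, hu, hμ⟩ := hG.exists_three_mul_sq_le_det_fin_two
  have hm := hT.three_mul_sq_le_scaledSchur hmin hu
  rw [hT.isHermitian.det_scaledSchur, hdet, mul_one] at hμ
  set μ := u ⬝ᵥ T.scaledSchur *ᵥ u
  have h4 : 9 * T 0 0 ^ 4 ≤ 16 * μ ^ 2 := by nlinarith [pow_le_pow_left₀ (by positivity) hm 2]
  have h3 : 27 * T 0 0 ^ 3 ≤ 64 := by nlinarith
  nlinarith

theorem IsPrimitiveVector.exists_det_eq_one_fin_three {v : Fin 3 → ℤ} (hv : IsPrimitiveVector v) :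
    ∃ P : Matrix (Fin 3) (Fin 3) ℤ, P.det = 1 ∧ P *ᵥ Pi.single 0 1 = v := by
  set d : ℤ := ((Int.gcd (v 0) (v 1) : ℕ) : ℤ)
  obtain ⟨γ, δ, hγδ⟩ : IsCoprime d (v 2) := IsRelPrime.isCoprime fun g hd h2 ↦ hv g fun i ↦ by
    fin_cases i
    exacts [hd.trans (Int.gcd_dvd_left _ _), hd.trans (Int.gcd_dvd_right _ _), h2]
  obtain ⟨a, b, ha, hb, ⟨α, β, hαβ⟩⟩ : ∃ a b, v 0 = d * a ∧ v 1 = d * b ∧ IsCoprime a b := by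
    rcases Nat.eq_zero_or_pos (Int.gcd (v 0) (v 1)) with h | h
    · obtain ⟨h0, h1⟩ := Int.gcd_eq_zero_iff.1 h
      exact ⟨1, 0, by simp [d, h0, h1], by simp [h1], isCoprime_one_left⟩
    · obtain ⟨a, b, hab, ha, hb⟩ := Int.exists_gcd_one h
      exact ⟨a, b, by rw [ha, mul_comm], by rw [hb, mul_comm], Int.isCoprime_iff_gcd_eq_one.2 hab⟩
  refine ⟨!![v 0, -β, -δ * a; v 1, α, -δ * b; v 2, 0, γ], ?_, ?_⟩
  · simp only [det_fin_three, of_apply, cons_val', cons_val_zero, cons_val_one, cons_val_two,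
      empty_val', cons_val_fin_one, head_cons, tail_cons, head_fin_const]
    rw [ha, hb]
    linear_combination (α * a + β * b) * hγδ + hαβ
  · ext i; fin_cases i <;> simp

theorem Matrix.PosDef.exists_sq_add_sq_add_sq_of_det_eq_one {S : Matrix (Fin 3) (Fin 3) ℤ}
    (hS : S.PosDef) (hdet : S.det = 1) (v : Fin 3 → ℤ) :
    ∃ a b c, v ⬝ᵥ S *ᵥ v = a ^ 2 + b ^ 2 + c ^ 2 := by
  obtain ⟨T, hT, hTdet, hmin, -, hval⟩ :=
    hS.exists_equiv_forall_apply_le 0 fun _ ↦ IsPrimitiveVector.exists_det_eq_one_fin_three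
  rw [hdet] at hTdet
  have h00 := hT.apply_zero_zero_eq_one hTdet hmin
  have hG := hT.posDef_scaledSchur_of_forall_le hmin
  obtain ⟨w, hw⟩ := hval v
  obtain ⟨x, y, z, rfl⟩ : ∃ x y z, w = ![x, y, z] := ⟨w 0, w 1, w 2, by ext i; fin_cases i <;> rfl⟩
  obtain ⟨b, c, hbc⟩ := hG.exists_sq_add_sq_of_det_eq_one
    (by rw [hT.isHermitian.det_scaledSchur, h00, hTdet, mul_one]) ![y, z]
  refine ⟨x + T 0 1 * y + T 0 2 * z, b, c, ?_⟩
  have := hT.isHermitian.mul_dotProduct_mulVec_fin_three x y z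
  rw [h00, one_mul, one_mul, ← hw, hbc] at this
  rw [this]
  ring

theorem ZMod.isSquare_neg_two_mul {p N : ℕ} [Fact p.Prime] (hN : Odd N) (hp : p % 8 = 3)
    (hNp : N ∣ p + 1) : IsSquare (-(2 * N) : ZMod p) := by
  have hp2 : p ≠ 2 := by omega
  have hp4 : p % 4 = 3 := by omega
  have hpodd : Odd p := Nat.odd_iff.2 (by omega)
  have hN0 : ((N : ℤ) : ZMod p) ≠ 0 := by
    rw [Int.cast_natCast, Ne, ZMod.natCast_eq_zero_iff]
    exact fun hpN ↦ (Fact.out : p.Prime).not_dvd_one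
      ((Nat.dvd_add_right (dvd_refl p)).1 (hpN.trans hNp))
  have hpN : jacobiSym p N = ZMod.χ₄ N := by
    have hmod : (-1 : ℤ) ≡ p [ZMOD N] :=
      Int.modEq_iff_dvd.2 (by simpa using Int.natCast_dvd_natCast.2 hNp)
    rw [jacobiSym.mod_left, ← hmod, ← jacobiSym.mod_left, jacobiSym.at_neg_one hN]
  have hNsq : IsSquare ((N : ℤ) : ZMod p) := by
    rw [← legendreSym.eq_one_iff p hN0, jacobiSym.legendreSym.to_jacobiSym]
    rcases Nat.odd_mod_four_iff.1 (Nat.odd_iff.1 hN) with h | h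
    · rw [jacobiSym.quadratic_reciprocity_one_mod_four h hpodd, hpN, ZMod.χ₄_nat_one_mod_four h]
    · rw [jacobiSym.quadratic_reciprocity_three_mod_four h hp4, hpN, ZMod.χ₄_nat_three_mod_four h,
        neg_neg]
  have h2 : IsSquare (-2 : ZMod p) := (ZMod.exists_sq_eq_neg_two_iff hp2).2 (Or.inr hp)
  simpa using h2.mul hNsq

theorem exists_two_mul_eq_sq_add_sq_add_sq_of_eq_mul {N p m B c : ℤ} (hN : 0 < N) (hp : 0 < p)
    (hm : p + 1 = 2 * N * m) (hc : B ^ 2 + m = p * c) :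
    ∃ a b c : ℤ, 2 * N = a ^ 2 + b ^ 2 + c ^ 2 := by
  let S : Matrix (Fin 3) (Fin 3) ℤ := !![2 * N, 0, 1; 0, p, B; 1, B, c]
  have hS : S.IsHermitian := by ext i j; fin_cases i <;> fin_cases j <;> rfl
  have hdet : S.det = 1 := by
    simp [S, det_fin_three]
    linear_combination -hm - 2 * N * hc
  have h2N : 0 < 2 * N := by positivity
  have hpos : S.PosDef := by
    refine posDef_of_posDef_scaledSchur hS h2N (posDef_fin_two_of_pos (isHermitian_scaledSchur S)
      ?_ (by rw [hS.det_scaledSchur, hdet]; simpa [S] using h2N))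
    simpa [S, scaledSchur] using mul_pos h2N hp
  obtain ⟨a, b, c, h⟩ := hpos.exists_sq_add_sq_add_sq_of_det_eq_one hdet (Pi.single 0 1)
  exact ⟨a, b, c, by simpa [S] using h⟩

theorem exists_two_mul_eq_sq_add_sq_add_sq {N : ℕ} (hN : Odd N) :
    ∃ a b c : ℤ, 2 * (N : ℤ) = a ^ 2 + b ^ 2 + c ^ 2 := by
  obtain ⟨p, -, hp, hpN⟩ := Nat.forall_exists_prime_gt_and_zmodEq 0 (q := 8 * N)
    (a := 4 * N - 1) (by have := hN.pos; omega) ⟨-(4 * N + 1), 2 * N, by push_cast; ring⟩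
  have := Fact.mk hp
  obtain ⟨k, hk⟩ := hpN.dvd
  push_cast at hk
  have hp8 : p % 8 = 3 := by
    obtain ⟨j, rfl⟩ := hN
    have : (p : ℤ) = 8 * (j - (2 * j + 1) * k) + 3 := by push_cast at hk; linear_combination -hk
    omega
  obtain ⟨m, hm⟩ : ∃ m : ℤ, (p : ℤ) + 1 = 2 * N * m := ⟨2 - 4 * k, by linear_combination -hk⟩
  obtain ⟨s, hs⟩ := ZMod.isSquare_neg_two_mul hN hp8
    (Int.natCast_dvd_natCast.1 ⟨2 * m, by push_cast; linear_combination hm⟩)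
  -- `(s m)² = -2N m² ≡ -m (mod p)` because `2N m ≡ 1`
  obtain ⟨B, hB⟩ := ZMod.intCast_surjective (s * (m : ZMod p))
  obtain ⟨c, hc⟩ : (p : ℤ) ∣ B ^ 2 + m := by
    rw [← ZMod.intCast_zmod_eq_zero_iff_dvd]
    have h1 : ((2 * N * m : ℤ) : ZMod p) = 1 := by rw [← hm]; simp
    push_cast at h1 ⊢
    rw [hB]
    linear_combination (-m ^ 2) * hs + (-m) * h1
  exact exists_two_mul_eq_sq_add_sq_add_sq_of_eq_mul (by have := hN.pos; omega)
    (by exact_mod_cast hp.pos) hm hc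

theorem Int.sq_emod_four (t : ℤ) : t ^ 2 % 4 = t % 2 := by
  rcases Int.even_or_odd' t with ⟨k, rfl | rfl⟩ <;> ring_nf <;> omega

theorem Int.three_dvd_sub_sub_or_of_sq_add_sq_add_sq {a b c : ℤ}
    (h : (a ^ 2 + b ^ 2 + c ^ 2) % 3 ≠ 1) :
    3 ∣ a - b - c ∨ 3 ∣ a - b + c ∨ 3 ∣ a + b - c ∨ 3 ∣ a + b + c := by
  have key : ∀ a b c : ZMod 3, a ^ 2 + b ^ 2 + c ^ 2 ≠ 1 →
      a - b - c = 0 ∨ a - b + c = 0 ∨ a + b - c = 0 ∨ a + b + c = 0 := by decide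
  have e (t : ℤ) : 3 ∣ t ↔ ((t : ZMod 3) = 0) := (ZMod.intCast_zmod_eq_zero_iff_dvd t 3).symm
  simp only [e, Int.cast_add, Int.cast_sub]
  refine key _ _ _ fun h' ↦ h ?_
  have := (ZMod.intCast_eq_intCast_iff' (a ^ 2 + b ^ 2 + c ^ 2 : ℤ) 1 3).1 (by push_cast; exact h')
  simpa using this

theorem exists_eq_sq_add_three_mul_sq_add_six_mul_sq_of_dvd {N a b c : ℤ} (hab : 2 ∣ a + b)
    (hc : 2 ∣ c) (habc : 3 ∣ a - b - c) (h : 2 * N = a ^ 2 + b ^ 2 + c ^ 2) :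
    ∃ x y z : ℤ, N = x ^ 2 + 3 * y ^ 2 + 6 * z ^ 2 := by
  obtain ⟨x, hx⟩ := hab
  obtain ⟨y, hy⟩ : 6 ∣ a - b + 2 * c := by omega
  obtain ⟨z, hz⟩ : 6 ∣ a - b - c := by omega
  refine ⟨x, y, z, ?_⟩
  have ha : a = x + y + 2 * z := by omega
  have hb : b = x - y - 2 * z := by omega
  have hc : c = 2 * y - 2 * z := by omega
  subst ha hb hc
  linarith

theorem exists_eq_sq_add_three_mul_sq_add_six_mul_sq {N a b c : ℤ} (hN2 : N % 2 = 1)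
    (hN3 : N % 3 ≠ 2) (h : 2 * N = a ^ 2 + b ^ 2 + c ^ 2) :
    ∃ x y z : ℤ, N = x ^ 2 + 3 * y ^ 2 + 6 * z ^ 2 := by
  suffices key : ∀ a b c : ℤ, 2 * N = a ^ 2 + b ^ 2 + c ^ 2 → a % 2 = b % 2 →
      ∃ x y z : ℤ, N = x ^ 2 + 3 * y ^ 2 + 6 * z ^ 2 by
    rcases (by omega : a % 2 = b % 2 ∨ a % 2 = c % 2 ∨ b % 2 = c % 2) with h' | h' | h'
    · exact key a b c h h'
    · exact key a c b (by linear_combination h) h'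
    · exact key b c a (by linear_combination h) h'
  intro a b c h hab
  have hc : 2 ∣ c := by
    have := Int.sq_emod_four a; have := Int.sq_emod_four b; have := Int.sq_emod_four c
    omega
  rcases Int.three_dvd_sub_sub_or_of_sq_add_sq_add_sq (a := a) (b := b) (c := c) (by omega)
    with h3 | h3 | h3 | h3
  · exact exists_eq_sq_add_three_mul_sq_add_six_mul_sq_of_dvd (by omega) hc h3 h
  · exact exists_eq_sq_add_three_mul_sq_add_six_mul_sq_of_dvd (a := a) (b := b) (c := -c)
      (by omega) (by omega) (by omega) (by linear_combination h)
  · exact exists_eq_sq_add_three_mul_sq_add_six_mul_sq_of_dvd (a := a) (b := -b) (c := c)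
      (by omega) hc (by omega) (by linear_combination h)
  · exact exists_eq_sq_add_three_mul_sq_add_six_mul_sq_of_dvd (a := a) (b := -b) (c := -c)
      (by omega) (by omega) (by omega) (by linear_combination h)

theorem exists_sq_add_two_mul_sq_eq_not_dvd (y z : ℤ) (hyz : y ≠ 0 ∨ z ≠ 0) :
    ∃ y' z' : ℤ, y' ^ 2 + 2 * z' ^ 2 = y ^ 2 + 2 * z ^ 2 ∧ ¬(3 ∣ y' ∧ 3 ∣ z') := by
  obtain ⟨M, hM⟩ : ∃ M : ℕ, y ^ 2 + 2 * z ^ 2 = M := ⟨_, (Int.toNat_of_nonneg (by positivity)).symm⟩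
  induction M using Nat.strong_induction_on generalizing y z with
  | _ M ih =>
  by_cases h3 : 3 ∣ y ∧ 3 ∣ z
  swap
  · exact ⟨y, z, rfl, h3⟩
  obtain ⟨⟨Y, rfl⟩, ⟨Z, rfl⟩⟩ := h3
  have hYZ : Y ≠ 0 ∨ Z ≠ 0 := by omega
  have hpos : 0 < Y ^ 2 + 2 * Z ^ 2 := by rcases hYZ with h | h <;> positivity
  have h9 : (3 * Y) ^ 2 + 2 * (3 * Z) ^ 2 = 9 * (Y ^ 2 + 2 * Z ^ 2) := by ring
  obtain ⟨Y', Z', hYZ', hnd⟩ := ih (Y ^ 2 + 2 * Z ^ 2).toNat (by omega) Y Z hYZ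
    (Int.toNat_of_nonneg hpos.le).symm
  -- `(Y' ± 4Z')² + 2(2Y' ∓ Z')² = 9(Y'² + 2Z'²)`, and `3` divides both entries iff `3 ∣ Y' ± Z'`
  by_cases hd : 3 ∣ Y' - Z'
  · refine ⟨Y' + 4 * Z', 2 * Y' - Z', by linear_combination 9 * hYZ', ?_⟩
    omega
  · refine ⟨Y' - 4 * Z', 2 * Y' + Z', by linear_combination 9 * hYZ', ?_⟩
    omega

theorem Int.three_dvd_sub_add_or_of_not_dvd {x y z : ℤ} (hx : ¬ 3 ∣ x)
    (hyz : ¬(3 ∣ y ∧ 3 ∣ z)) :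
    3 ∣ x - y + z ∨ 3 ∣ x - y - z ∨ 3 ∣ x + y + z ∨ 3 ∣ x + y - z := by
  have key : ∀ x y z : ZMod 3, x ≠ 0 → ¬(y = 0 ∧ z = 0) →
      x - y + z = 0 ∨ x - y - z = 0 ∨ x + y + z = 0 ∨ x + y - z = 0 := by decide
  have e (t : ℤ) : 3 ∣ t ↔ ((t : ZMod 3) = 0) := (ZMod.intCast_zmod_eq_zero_iff_dvd t 3).symm
  simp only [e, Int.cast_add, Int.cast_sub] at hx hyz ⊢
  exact key _ _ _ hx hyz

theorem exists_eq_sq_add_three_mul_sq_add_six_mul_sq_modEq_of_dvd {N x y z : ℤ}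
    (h : N = x ^ 2 + 3 * y ^ 2 + 6 * z ^ 2) (h3 : 3 ∣ x - y + z) :
    ∃ x' y' z' : ℤ, N = x' ^ 2 + 3 * y' ^ 2 + 6 * z' ^ 2 ∧ x' ≡ y [ZMOD 2] := by
  obtain ⟨z', hz'⟩ := h3
  obtain ⟨y', hy'⟩ : 3 ∣ x + 2 * y - 2 * z := by omega
  refine ⟨y + 2 * z, y', z', mul_left_cancel₀ (by norm_num : (9 : ℤ) ≠ 0) ?_, ?_⟩
  · linear_combination 9 * h + 3 * (x + 2 * y - 2 * z + 3 * y') * hy' +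
      6 * (x - y + z + 3 * z') * hz'
  · simp [Int.ModEq]

theorem exists_eq_sq_add_three_mul_sq_add_six_mul_sq_modEq_of_not_dvd {N x y z : ℤ} (hN : ¬ 3 ∣ N)
    (h : N = x ^ 2 + 3 * y ^ 2 + 6 * z ^ 2) (hyz : ¬(3 ∣ y ∧ 3 ∣ z)) :
    ∃ x' y' z' : ℤ, N = x' ^ 2 + 3 * y' ^ 2 + 6 * z' ^ 2 ∧ x' ≡ y [ZMOD 2] := by
  have hx : ¬ 3 ∣ x := by
    rintro ⟨k, rfl⟩
    exact hN ⟨3 * k ^ 2 + y ^ 2 + 2 * z ^ 2, by rw [h]; ring⟩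
  rcases Int.three_dvd_sub_add_or_of_not_dvd hx hyz with h3 | h3 | h3 | h3
  · exact exists_eq_sq_add_three_mul_sq_add_six_mul_sq_modEq_of_dvd h h3
  · exact exists_eq_sq_add_three_mul_sq_add_six_mul_sq_modEq_of_dvd (N := N) (x := x) (y := y)
      (z := -z) (by rw [h]; ring) (by omega)
  · obtain ⟨x', y', z', h', hx'⟩ := exists_eq_sq_add_three_mul_sq_add_six_mul_sq_modEq_of_dvd
      (N := N) (x := x) (y := -y) (z := z) (by rw [h]; ring) (by omega)
    exact ⟨x', y', z', h', hx'.trans (by simp [Int.ModEq])⟩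
  · obtain ⟨x', y', z', h', hx'⟩ := exists_eq_sq_add_three_mul_sq_add_six_mul_sq_modEq_of_dvd
      (N := N) (x := x) (y := -y) (z := -z) (by rw [h]; ring) (by omega)
    exact ⟨x', y', z', h', hx'.trans (by simp [Int.ModEq])⟩

theorem exists_eq_sq_add_three_mul_sq_add_six_mul_sq_modEq_add_one {N x y z : ℤ} (hN2 : N % 2 = 1)
    (hN3 : ¬ 3 ∣ N) (h : N = x ^ 2 + 3 * y ^ 2 + 6 * z ^ 2) (hyz : y ≠ 0 ∨ z ≠ 0) :
    ∃ x' y' z' : ℤ, N = x' ^ 2 + 3 * y' ^ 2 + 6 * z' ^ 2 ∧ x' ≡ x + 1 [ZMOD 2] := by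
  obtain ⟨y', z', hyz', hnd⟩ := exists_sq_add_two_mul_sq_eq_not_dvd y z hyz
  have h' : N = x ^ 2 + 3 * y' ^ 2 + 6 * z' ^ 2 := by rw [h]; linear_combination -3 * hyz'
  obtain ⟨x', y'', z'', h'', hx'⟩ :=
    exists_eq_sq_add_three_mul_sq_add_six_mul_sq_modEq_of_not_dvd hN3 h' hnd
  refine ⟨x', y'', z'', h'', hx'.trans ?_⟩
  have := Int.sq_emod_four x
  have := Int.sq_emod_four y'
  simp only [Int.ModEq]
  omega

theorem stmt_15_general (n : ℕ) (hns : ¬ IsSquare (6*(n : ℤ) + 1)) (δ : ℤ) :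
    ∃ x y z : ℤ, x ≡ δ [ZMOD 2] ∧ 6*(n : ℤ) + 1 = x^2 + 3*y^2 + 6*z^2 := by
  obtain ⟨a, b, c, h⟩ := exists_two_mul_eq_sq_add_sq_add_sq (N := 6 * n + 1) ⟨3 * n, by ring⟩
  push_cast at h
  obtain ⟨x, y, z, hN⟩ := exists_eq_sq_add_three_mul_sq_add_six_mul_sq (by omega) (by omega) h
  by_cases hx : x ≡ δ [ZMOD 2]
  · exact ⟨x, y, z, hx, hN⟩
  have hyz : y ≠ 0 ∨ z ≠ 0 := by
    by_contra! h0
    exact hns ⟨x, by rw [hN, h0.1, h0.2]; ring⟩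
  obtain ⟨x', y', z', hN', hx'⟩ :=
    exists_eq_sq_add_three_mul_sq_add_six_mul_sq_modEq_add_one (by omega) (by omega) hN hyz
  refine ⟨x', y', z', hx'.trans ?_, hN'⟩
  simp only [Int.ModEq] at hx ⊢
  omega

theorem stmt_15 (n : ℕ) (hns : ¬ IsSquare (6*(n : ℤ) + 1)) (δ : ℤ) (hδ : δ = 0 ∨ δ = 1) :
    ∃ x y z : ℤ, x ≡ δ [ZMOD 2] ∧ 6*(n : ℤ) + 1 = x^2 + 3*y^2 + 6*z^2 :=
  stmt_15_general n hns δ
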